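/- Let n ∈ ℕ with n ≥ 5, and let v* be the largest natural number v such that v·2^v < 2^{n-3} (equivalently, v* = ⌈W₀(2^{n-3}·ln 2)/ln 2 − 1⌉, where W₀ is the principal branch of the Lambert W function). Assume v* ≤ 253. Then the integer 2^{v*} + 1 is not representable as an n-bit takum: there exists no bit string M of length n with τ(M) = 2^{v*} + 1. Hence 2^{v*} is the largest consecutive integer representable by n-bit takums. -/

import Mathlib

/-- Integer value of a bit string read MSB → LSB. -/
def bitsToNat (L : List Bool) : ℕ :=
  L.foldl (fun a b => 2 * a + (if b then 1 else 0)) 0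

/-- The (linear) takum decoding function `τ`. A bit string (MSB → LSB, padded on the
right with zero "ghost bits" as needed) consists of a sign bit `S`, a direction bit `D`,
three regime bits `R` with regime `r = int(R)` if `D = 1` and `r = 7 - int(R)` if
`D = 0`, `r` characteristic bits `C` with characteristic `c = 2^r - 1 + int(C)` if
`D = 1` and `c = -2^(r+1) + 1 + int(C)` if `D = 0`, and fraction bits `F` with fraction
`f = int(F)/2^p ∈ [0,1)`. The all-zeros string encodes `0` (`some 0`), `10…0` encodes
NaR (`none`), and every other string encodes `((1 - 3S) + f) · 2^e` with exponent
`e = (-1)^S (c + S)`. -/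
def takumVal : List Bool → Option ℚ
  | [] => some 0
  | S :: rest =>
    if rest.all (fun b => b == false) then
      if S then none else some 0
    else
      let D : Bool := rest.getD 0 false
      let rawR : ℕ := bitsToNat [rest.getD 1 false, rest.getD 2 false, rest.getD 3 false]
      let r : ℕ := if D then rawR else 7 - rawR
      let C : List Bool := (rest.drop 4).take r
      let Cpad : List Bool := C ++ List.replicate (r - C.length) false
      let c : ℤ := if D then 2 ^ r - 1 + (bitsToNat Cpad : ℤ)
                   else -(2 ^ (r + 1)) + 1 + (bitsToNat Cpad : ℤ)
      let F : List Bool := rest.drop (4 + r)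
      let f : ℚ := (bitsToNat F : ℚ) / 2 ^ F.length
      let s : ℤ := if S then 1 else 0
      let e : ℤ := (if S then -1 else 1) * (c + s)
      some (((1 - 3 * (s : ℚ)) + f) * 2 ^ e)


/-!
A takum `x ≥ 1` is `(1 + a / 2^p) · 2^c` with `c ≥ 0`, where the characteristic `c` occupies
`⌊log₂ (c + 1)⌋` characteristic bits, leaving `p = n - 5 - ⌊log₂ (c + 1)⌋` fraction bits; the
negative takums `(-2 + a / 2^p) · 2^e` are laid out symmetrically. So every integer with exponent
`c` is a takum as soon as `c ≤ p`, while an odd integer above `2^c` needs `p ≥ c`.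
Taking logarithms, the defining inequalities of `v` become
`v + ⌊log₂ v⌋ + 4 ≤ n < v + ⌊log₂ (v + 1)⌋ + 5`: the left one gives `c ≤ p` for every `c < v`,
so all integers of absolute value at most `2^v` are takums, and the right one gives `p < v` at
`c = v`, so `2^v + 1` is not.
-/

theorem Nat.add_log_lt_of_mul_two_pow_lt {u N : ℕ} (hu : u ≠ 0) (h : u * 2 ^ u < 2 ^ N) :
    u + Nat.log 2 u < N := by
  refine (Nat.pow_lt_pow_iff_right one_lt_two).mp (lt_of_le_of_lt ?_ h)
  rw [pow_add, mul_comm]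
  exact Nat.mul_le_mul_right _ (Nat.pow_log_le_self 2 hu)

theorem Nat.lt_add_log_of_two_pow_le_mul {u N : ℕ} (h : 2 ^ N ≤ u * 2 ^ u) :
    N < u + Nat.log 2 u + 1 := by
  refine (Nat.pow_lt_pow_iff_right one_lt_two).mp (lt_of_le_of_lt h ?_)
  rw [add_assoc, pow_add, mul_comm]
  exact Nat.mul_lt_mul_of_pos_left (Nat.lt_pow_succ_log_self one_lt_two u) (by positivity)

theorem bitsToNat_foldl (L : List Bool) (a : ℕ) :
    L.foldl (fun a b => 2 * a + (if b then 1 else 0)) a = a * 2 ^ L.length + bitsToNat L := by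
  induction L generalizing a with
  | nil => simp [bitsToNat]
  | cons b L ih =>
    simp only [bitsToNat, List.foldl_cons, List.length_cons]
    rw [ih, ih (2 * 0 + if b then 1 else 0)]
    ring

theorem bitsToNat_append (L₁ L₂ : List Bool) :
    bitsToNat (L₁ ++ L₂) = bitsToNat L₁ * 2 ^ L₂.length + bitsToNat L₂ := by
  rw [bitsToNat, List.foldl_append, bitsToNat_foldl]
  rfl

theorem bitsToNat_singleton (b : Bool) : bitsToNat [b] = if b then 1 else 0 := by
  cases b <;> rfl

theorem bitsToNat_lt (L : List Bool) : bitsToNat L < 2 ^ L.length := by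
  induction L using List.reverseRecOn with
  | nil => simp [bitsToNat]
  | append_singleton L b ih =>
    rw [bitsToNat_append, bitsToNat_singleton, List.length_append, List.length_singleton, pow_succ]
    split <;> omega

theorem bitsToNat_eq_zero_of_all_false {L : List Bool} (h : L.all (· == false) = true) :
    bitsToNat L = 0 := by
  induction L using List.reverseRecOn with
  | nil => rfl
  | append_singleton L b ih =>
    simp only [List.all_append, Bool.and_eq_true, List.all_cons, List.all_nil, beq_iff_eq,
      Bool.and_true] at h
    rw [bitsToNat_append, ih h.1, bitsToNat_singleton, h.2]
    rfl

theorem bitsToNat_replicate_false (m : ℕ) : bitsToNat (List.replicate m false) = 0 :=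
  bitsToNat_eq_zero_of_all_false (by simp)

theorem exists_bitsToNat_eq {len x : ℕ} (hx : x < 2 ^ len) :
    ∃ L : List Bool, L.length = len ∧ bitsToNat L = x := by
  induction len generalizing x with
  | zero => exact ⟨[], rfl, by simp_all [bitsToNat]⟩
  | succ len ih =>
    obtain ⟨L, hL, hLx⟩ := ih (x := x / 2) (by rw [pow_succ] at hx; omega)
    refine ⟨L ++ [decide (x % 2 = 1)], by simp [hL], ?_⟩
    rw [bitsToNat_append, hLx, bitsToNat_singleton]
    rcases Nat.mod_two_eq_zero_or_one x with h | h <;> simp [h] <;> omega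

/-- The characteristic `c` for direction bit `D`, regime `r` and characteristic bits `C` with
`int(C) = k`. -/
def takumCharacteristic (D : Bool) (r k : ℕ) : ℤ :=
  if D then 2 ^ r - 1 + k else -2 ^ (r + 1) + 1 + k

theorem takumCharacteristic_true (r k : ℕ) :
    takumCharacteristic true r k = ((2 ^ r - 1 + k : ℕ) : ℤ) := by
  rw [takumCharacteristic, if_pos rfl]
  push_cast [Nat.one_le_two_pow]
  ring

theorem takumCharacteristic_false_le {r k : ℕ} (hk : k < 2 ^ r) :
    takumCharacteristic false r k ≤ -1 := by
  rw [takumCharacteristic, if_neg Bool.false_ne_true, pow_succ]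
  have : (k : ℤ) < 2 ^ r := by exact_mod_cast hk
  linarith

theorem takumVal_cons (S D x y z : Bool) (tail : List Bool)
    (hne : (D :: x :: y :: z :: tail).all (· == false) = false) {r k : ℕ}
    (hr : (if D then bitsToNat [x, y, z] else 7 - bitsToNat [x, y, z]) = r)
    (hk : bitsToNat (tail.take r ++ List.replicate (r - (tail.take r).length) false) = k) :
    takumVal (S :: D :: x :: y :: z :: tail) =
      some (((if S then -2 else 1 : ℚ) + bitsToNat (tail.drop r) / 2 ^ (tail.length - r)) *
        (2 : ℚ) ^ (if S then -(takumCharacteristic D r k + 1) else takumCharacteristic D r k)) := by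
  have hdrop : (D :: x :: y :: z :: tail).drop (4 + r) = tail.drop r := by
    rw [Nat.add_comm]; rfl
  rw [takumVal, hne]
  simp only [Bool.false_eq_true, if_false]
  rw [show (D :: x :: y :: z :: tail).getD 0 false = D from rfl,
    show (D :: x :: y :: z :: tail).getD 1 false = x from rfl,
    show (D :: x :: y :: z :: tail).getD 2 false = y from rfl,
    show (D :: x :: y :: z :: tail).getD 3 false = z from rfl,
    show (D :: x :: y :: z :: tail).drop 4 = tail from rfl, hr, hk, hdrop, List.length_drop]
  cases S <;> norm_num [takumCharacteristic]

theorem takumVal_cons_append (S D x y z : Bool) (C F : List Bool)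
    (hne : (D :: x :: y :: z :: (C ++ F)).all (· == false) = false)
    (hr : (if D then bitsToNat [x, y, z] else 7 - bitsToNat [x, y, z]) = C.length) :
    takumVal (S :: D :: x :: y :: z :: (C ++ F)) =
      some (((if S then -2 else 1 : ℚ) + bitsToNat F / 2 ^ F.length) * (2 : ℚ) ^
        (if S then -(takumCharacteristic D C.length (bitsToNat C) + 1)
          else takumCharacteristic D C.length (bitsToNat C))) := by
  rw [takumVal_cons S D x y z (C ++ F) hne hr (k := bitsToNat C) (by simp)]
  simp

def TakumRepresentable (n : ℕ) (x : ℚ) : Prop :=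
  ∃ M : List Bool, M.length = n ∧ takumVal M = some x

theorem takumRepresentable_zero (n : ℕ) : TakumRepresentable n 0 := by
  refine ⟨List.replicate n false, List.length_replicate, ?_⟩
  cases n <;> simp [takumVal, List.replicate_succ]

theorem takumRepresentable_neg_one {n : ℕ} (hn : 5 ≤ n) : TakumRepresentable n (-1) := by
  refine ⟨true :: true :: false :: false :: false :: List.replicate (n - 5) false,
    by simp; omega, ?_⟩
  rw [takumVal_cons true true false false false _ (by simp) (r := 0) (k := 0) rfl rfl]
  norm_num [bitsToNat_replicate_false, takumCharacteristic]

/-- The characteristic bits are all zero here, so they may be ghost bits: `n` need not leave room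
for them. -/
theorem takumRepresentable_two_pow_two_pow_sub_one {n r : ℕ} (hn : 5 ≤ n) (hr : r < 8) :
    TakumRepresentable n (2 ^ (2 ^ r - 1)) := by
  obtain ⟨R, hRlen, hR⟩ := exists_bitsToNat_eq (len := 3) (x := r) (by norm_num; omega)
  obtain ⟨x, y, z, rfl⟩ := List.length_eq_three.mp hRlen
  refine ⟨false :: true :: x :: y :: z :: List.replicate (n - 5) false, by simp; omega, ?_⟩
  rw [takumVal_cons false true x y z _ (by simp) (by simpa using hR) (k := 0)
    (bitsToNat_eq_zero_of_all_false (by simp)), takumCharacteristic_true]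
  simp only [Bool.false_eq_true, ↓reduceIte, Nat.add_zero, zpow_natCast]
  simp [bitsToNat_replicate_false]

theorem takumRepresentable_one_add_div_mul_two_pow {k a p : ℕ} (hk : k < 255)
    (ha : a < 2 ^ p) :
    TakumRepresentable (Nat.log 2 (k + 1) + 5 + p) ((1 + a / 2 ^ p) * 2 ^ k) := by
  set r := Nat.log 2 (k + 1)
  have hr : r < 8 := Nat.log_lt_of_lt_pow (by omega) (by norm_num; omega)
  have h2r : 2 ^ r ≤ k + 1 := Nat.pow_log_le_self 2 (by omega)
  have h2r' : k + 1 < 2 ^ r * 2 := pow_succ 2 r ▸ Nat.lt_pow_succ_log_self one_lt_two _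
  obtain ⟨R, hRlen, hR⟩ := exists_bitsToNat_eq (len := 3) (x := r) (by norm_num; omega)
  obtain ⟨x, y, z, rfl⟩ := List.length_eq_three.mp hRlen
  obtain ⟨C, hClen, hC⟩ := exists_bitsToNat_eq (len := r) (x := k + 1 - 2 ^ r) (by omega)
  obtain ⟨F, rfl, rfl⟩ := exists_bitsToNat_eq ha
  refine ⟨false :: true :: x :: y :: z :: (C ++ F), by simp [hClen]; omega, ?_⟩
  rw [takumVal_cons_append false true x y z C F (by simp) (by simpa [hClen] using hR),
    takumCharacteristic_true, hClen, hC, show 2 ^ r - 1 + (k + 1 - 2 ^ r) = k by omega]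
  simp

theorem takumRepresentable_neg_two_add_div_mul_two_pow {e a p : ℕ} (he : e < 254)
    (ha : a < 2 ^ p) :
    TakumRepresentable (Nat.log 2 (e + 1) + 5 + p) ((-2 + a / 2 ^ p) * 2 ^ e) := by
  set r := Nat.log 2 (e + 1)
  have hr : r < 8 := Nat.log_lt_of_lt_pow (by omega) (by norm_num; omega)
  have h2r : 2 ^ r ≤ e + 1 := Nat.pow_log_le_self 2 (by omega)
  have h2r' : e + 1 < 2 ^ r * 2 := pow_succ 2 r ▸ Nat.lt_pow_succ_log_self one_lt_two _
  obtain ⟨R, hRlen, hR⟩ := exists_bitsToNat_eq (len := 3) (x := 7 - r) (by norm_num; omega)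
  obtain ⟨x, y, z, rfl⟩ := List.length_eq_three.mp hRlen
  obtain ⟨C, hClen, hC⟩ := exists_bitsToNat_eq (len := r) (x := 2 ^ r * 2 - 2 - e) (by omega)
  obtain ⟨F, rfl, rfl⟩ := exists_bitsToNat_eq ha
  -- for `r = 7` the regime bits are zero, and `e < 254` makes `C ≠ 0`
  have hne : (false :: x :: y :: z :: (C ++ F)).all (· == false) = false := by
    by_contra h
    simp only [Bool.not_eq_false, List.all_cons, List.all_append, Bool.and_eq_true,
      beq_iff_eq] at h
    obtain ⟨-, rfl, rfl, rfl, hC0, -⟩ := h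
    rw [bitsToNat_eq_zero_of_all_false hC0] at hC
    have hr7 : r = 7 := by simp [bitsToNat] at hR; omega
    rw [hr7] at hC
    omega
  refine ⟨true :: false :: x :: y :: z :: (C ++ F), by simp [hClen]; omega, ?_⟩
  rw [takumVal_cons_append true false x y z C F hne (by simp [hR, hClen]; omega)]
  have hc : takumCharacteristic false C.length (bitsToNat C) = -(e + 1) := by
    have hcast : ((2 ^ r * 2 - 2 - e : ℕ) : ℤ) = 2 ^ r * 2 - 2 - e := by
      rw [Nat.sub_sub, Nat.cast_sub (by omega)]
      push_cast
      ring
    rw [takumCharacteristic, if_neg Bool.false_ne_true, hClen, hC, hcast]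
    ring
  simp [hc]

theorem TakumRepresentable.exists_of_ne_zero {n : ℕ} {x : ℚ} (hn : 5 ≤ n)
    (hx : TakumRepresentable n x) (hx0 : x ≠ 0) :
    ∃ (S D : Bool) (r k a : ℕ), k < 2 ^ r ∧ a < 2 ^ (n - 5 - r) ∧
      x = ((if S then -2 else 1) + a / 2 ^ (n - 5 - r)) *
        2 ^ (if S then -(takumCharacteristic D r k + 1) else takumCharacteristic D r k) := by
  obtain ⟨M, hM, hMx⟩ := hx
  obtain ⟨S, D, x₁, x₂, x₃, tail, rfl⟩ :
      ∃ S D x₁ x₂ x₃ tail, M = S :: D :: x₁ :: x₂ :: x₃ :: tail := by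
    rcases M with _ | ⟨S, _ | ⟨D, _ | ⟨x₁, _ | ⟨x₂, _ | ⟨x₃, tail⟩⟩⟩⟩⟩ <;>
      simp_all <;> omega
  have htail : tail.length = n - 5 := by simp at hM; omega
  cases hne : (D :: x₁ :: x₂ :: x₃ :: tail).all (· == false)
  case true =>
    rw [takumVal, hne, if_pos rfl] at hMx
    cases S <;> simp_all
  set r := if D then bitsToNat [x₁, x₂, x₃] else 7 - bitsToNat [x₁, x₂, x₃]
  set C := tail.take r ++ List.replicate (r - (tail.take r).length) false
  have hC : bitsToNat C < 2 ^ r := by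
    simpa [C, Nat.add_sub_cancel' (min_le_left _ _)] using bitsToNat_lt C
  refine ⟨S, D, r, bitsToNat C, bitsToNat (tail.drop r), hC, ?_, ?_⟩
  · simpa [htail] using bitsToNat_lt (tail.drop r)
  · rw [takumVal_cons S D x₁ x₂ x₃ tail hne rfl rfl, Option.some.injEq, htail] at hMx
    exact hMx.symm

theorem TakumRepresentable.exists_eq_one_add_div_mul_two_pow {n : ℕ} {x : ℚ} (hn : 5 ≤ n)
    (hx : TakumRepresentable n x) (hx1 : 1 ≤ x) :
    ∃ c a : ℕ, a < 2 ^ (n - 5 - Nat.log 2 (c + 1)) ∧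
      x = (1 + a / 2 ^ (n - 5 - Nat.log 2 (c + 1))) * 2 ^ c := by
  obtain ⟨S, D, r, k, a, hk, ha, rfl⟩ := hx.exists_of_ne_zero hn (by positivity)
  have hf1 : (a : ℚ) / 2 ^ (n - 5 - r) < 1 := by
    rw [div_lt_one (by positivity)]
    exact_mod_cast ha
  cases S
  case true =>
    have : (-2 + a / 2 ^ (n - 5 - r) : ℚ) * 2 ^ (-(takumCharacteristic D r k + 1)) < 0 :=
      mul_neg_of_neg_of_pos (by linarith) (by positivity)
    simp only [↓reduceIte] at hx1
    linarith
  simp only [Bool.false_eq_true, ↓reduceIte] at hx1 ⊢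
  cases D
  case false =>
    have : (1 + a / 2 ^ (n - 5 - r) : ℚ) * 2 ^ takumCharacteristic false r k < 1 :=
      calc _ ≤ (1 + a / 2 ^ (n - 5 - r) : ℚ) * 2 ^ (-1 : ℤ) := by
            gcongr
            · norm_num
            · exact takumCharacteristic_false_le hk
        _ < 2 * 2 ^ (-1 : ℤ) := by gcongr; linarith
        _ = 1 := by norm_num
    linarith
  case true =>
    have hlog : Nat.log 2 (2 ^ r - 1 + k + 1) = r :=
      Nat.log_eq_of_pow_le_of_lt_pow (by omega)
        (by rw [pow_succ]; have := @Nat.one_le_two_pow r; omega)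
    refine ⟨2 ^ r - 1 + k, a, by rwa [hlog], ?_⟩
    rw [hlog, takumCharacteristic_true, zpow_natCast]

theorem not_takumRepresentable_two_pow_add_one {n v : ℕ} (hn : 5 ≤ n)
    (hnv : n < v + Nat.log 2 (v + 1) + 5) : ¬ TakumRepresentable n (2 ^ v + 1) := by
  intro h
  have hv : 1 ≤ v := by
    by_contra! hv0
    simp [Nat.lt_one_iff.mp hv0] at hnv
    omega
  obtain ⟨c, a, ha, hx⟩ := h.exists_eq_one_add_div_mul_two_pow hn
    (le_add_of_nonneg_left (by positivity))
  set p := n - 5 - Nat.log 2 (c + 1)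
  have hf0 : (0 : ℚ) ≤ a / 2 ^ p := by positivity
  have hf1 : (a : ℚ) / 2 ^ p < 1 := by
    rw [div_lt_one (by positivity)]
    exact_mod_cast ha
  have h2v : (2 : ℚ) ≤ 2 ^ v := by simpa using pow_le_pow_right₀ (by norm_num : (1 : ℚ) ≤ 2) hv
  have h2c : (0 : ℚ) < 2 ^ c := by positivity
  obtain rfl : c = v := by
    have h1 : c < v + 1 :=
      (pow_lt_pow_iff_right₀ (one_lt_two (α := ℚ))).mp (by rw [pow_succ]; nlinarith)
    have h2 : v < c + 1 :=
      (pow_lt_pow_iff_right₀ (one_lt_two (α := ℚ))).mp (by rw [pow_succ]; nlinarith)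
    omega
  have ha1 : (1 : ℚ) ≤ a := by
    rcases Nat.eq_zero_or_pos a with rfl | ha0
    · simp at hx
    · exact_mod_cast ha0
  have hp : (2 : ℚ) ^ p < 2 ^ c := pow_lt_pow_right₀ one_lt_two (by omega)
  have hpow : (a : ℚ) * 2 ^ c = 2 ^ p := by
    field_simp at hx
    linarith
  nlinarith

theorem takumRepresentable_natCast {n m k : ℕ} (hkm : 2 ^ k ≤ m) (hmk : m < 2 ^ (k + 1))
    (hk : k < 255) (hkn : k + Nat.log 2 (k + 1) + 5 ≤ n) : TakumRepresentable n m := by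
  set p := n - 5 - Nat.log 2 (k + 1)
  have hsplit : 2 ^ (p - k) * 2 ^ k = 2 ^ p := by rw [← pow_add, Nat.sub_add_cancel (by omega)]
  have ha : (m - 2 ^ k) * 2 ^ (p - k) < 2 ^ p := by
    rw [← hsplit, mul_comm (2 ^ (p - k))]
    exact Nat.mul_lt_mul_of_pos_right (by rw [pow_succ] at hmk; omega) (by positivity)
  have := takumRepresentable_one_add_div_mul_two_pow hk ha
  rw [show Nat.log 2 (k + 1) + 5 + p = n by omega] at this
  convert this using 1
  rw [← (by exact_mod_cast hsplit : (2 : ℚ) ^ (p - k) * 2 ^ k = 2 ^ p)]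
  push_cast [hkm]
  field_simp
  ring

theorem takumRepresentable_neg_natCast {n j e : ℕ} (hej : 2 ^ e < j) (hje : j ≤ 2 ^ (e + 1))
    (he : e < 254) (hen : e + Nat.log 2 (e + 1) + 5 ≤ n) : TakumRepresentable n (-j) := by
  set p := n - 5 - Nat.log 2 (e + 1)
  have hsplit : 2 ^ (p - e) * 2 ^ e = 2 ^ p := by rw [← pow_add, Nat.sub_add_cancel (by omega)]
  have ha : (2 ^ (e + 1) - j) * 2 ^ (p - e) < 2 ^ p := by
    rw [← hsplit, mul_comm (2 ^ (p - e))]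
    exact Nat.mul_lt_mul_of_pos_right (by rw [pow_succ]; omega) (by positivity)
  have := takumRepresentable_neg_two_add_div_mul_two_pow he ha
  rw [show Nat.log 2 (e + 1) + 5 + p = n by omega] at this
  convert this using 1
  rw [← (by exact_mod_cast hsplit : (2 : ℚ) ^ (p - e) * 2 ^ e = 2 ^ p)]
  push_cast [hje]
  field_simp
  ring

theorem takumRepresentable_natCast_of_le_two_pow {n v m : ℕ} (hv1 : 1 ≤ v) (hv : v < 255)
    (hn : v + Nat.log 2 v + 4 ≤ n) (hm : m ≤ 2 ^ v) : TakumRepresentable n m := by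
  rcases Nat.eq_zero_or_pos m with rfl | hm0
  · simpa using takumRepresentable_zero n
  rcases hm.eq_or_lt with rfl | hmv
  · by_cases hvn : Nat.log 2 (v + 1) + 5 ≤ n
    · have := takumRepresentable_one_add_div_mul_two_pow (k := v) (a := 0)
        (p := n - 5 - Nat.log 2 (v + 1)) (by omega) (by positivity)
      rw [show Nat.log 2 (v + 1) + 5 + (n - 5 - Nat.log 2 (v + 1)) = n by omega] at this
      simpa using this
    · -- no room for the characteristic bits of `2^v` happens only for `v = 1`, `n = 5`
      have : Nat.log 2 (v + 1) ≤ Nat.log 2 v + 1 :=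
        (Nat.log_mono_right (by omega : v + 1 ≤ v * 2)).trans
          (Nat.log_mul_base one_lt_two (by omega)).le
      obtain rfl : v = 1 := by omega
      simpa using takumRepresentable_two_pow_two_pow_sub_one (r := 1) (by omega) (by norm_num)
  · have hkv : Nat.log 2 m < v := Nat.log_lt_of_lt_pow (by omega) hmv
    have : Nat.log 2 (Nat.log 2 m + 1) ≤ Nat.log 2 v := Nat.log_mono_right hkv
    exact takumRepresentable_natCast (Nat.pow_log_le_self 2 (by omega))
      (Nat.lt_pow_succ_log_self one_lt_two _) (by omega) (by omega)

theorem takumRepresentable_neg_natCast_of_le_two_pow {n v j : ℕ} (hv1 : 1 ≤ v) (hv : v < 255)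
    (hn : v + Nat.log 2 v + 4 ≤ n) (hj : j ≤ 2 ^ v) : TakumRepresentable n (-j) := by
  rcases Nat.lt_or_ge j 2 with hj2 | hj2
  · interval_cases j
    · simpa using takumRepresentable_zero n
    · simpa using takumRepresentable_neg_one (by omega)
  · have hev : Nat.log 2 (j - 1) < v := Nat.log_lt_of_lt_pow (by omega) (by omega)
    have : Nat.log 2 (Nat.log 2 (j - 1) + 1) ≤ Nat.log 2 v := Nat.log_mono_right hev
    have h1 := Nat.pow_log_le_self 2 (by omega : j - 1 ≠ 0)
    have h2 := Nat.lt_pow_succ_log_self one_lt_two (j - 1)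
    exact takumRepresentable_neg_natCast (e := Nat.log 2 (j - 1))
      (by omega) (by omega) (by omega) (by omega)

theorem takumRepresentable_intCast_of_abs_le_two_pow {n v : ℕ} (hv1 : 1 ≤ v) (hv : v < 255)
    (hn : v + Nat.log 2 v + 4 ≤ n) {m : ℤ} (hm : |m| ≤ 2 ^ v) : TakumRepresentable n m := by
  have hm' : m.natAbs ≤ 2 ^ v := by
    rw [← Int.natCast_natAbs] at hm
    exact_mod_cast hm
  rcases Int.natAbs_eq m with h | h <;> rw [h] <;> simp only [Int.cast_neg, Int.cast_natCast]
  · exact takumRepresentable_natCast_of_le_two_pow hv1 hv hn hm'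
  · exact takumRepresentable_neg_natCast_of_le_two_pow hv1 hv hn hm'

/-- **Largest consecutive takum integer.**
For `n ≥ 5`, let `v` be the largest natural number with `v·2^v < 2^(n-3)`
(equivalently `v = ⌈W₀(2^(n-3)·ln 2)/ln 2 − 1⌉`), and assume `v ≤ 253`. Then
`2^v + 1` is not representable as an `n`-bit takum; hence `2^v` is the largest
consecutive integer of `n`-bit takums, i.e. the greatest `M₀` such that every
integer `m` with `|m| ≤ M₀` is representable as an `n`-bit takum. -/
theorem takum_largest_consecutive_integer (n : ℕ) (hn : 5 ≤ n) (v : ℕ)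
    (hv : v * 2 ^ v < 2 ^ (n - 3))
    (hmax : ∀ u : ℕ, u * 2 ^ u < 2 ^ (n - 3) → u ≤ v)
    (hv253 : v ≤ 253) :
    (¬ ∃ M : List Bool, M.length = n ∧ takumVal M = some (((2 ^ v + 1 : ℤ) : ℚ))) ∧
    IsGreatest {M₀ : ℤ | ∀ m : ℤ, |m| ≤ M₀ →
      ∃ M : List Bool, M.length = n ∧ takumVal M = some (m : ℚ)} (2 ^ v) := by
  have hv1 : 1 ≤ v := hmax 1 <|
    calc 1 * 2 ^ 1 < 2 ^ 2 := by norm_num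
      _ ≤ 2 ^ (n - 3) := Nat.pow_le_pow_right two_pos (by omega)
  have hlow : v + Nat.log 2 v + 4 ≤ n := by
    have := Nat.add_log_lt_of_mul_two_pow_lt (by omega) hv
    omega
  have hup : n < v + Nat.log 2 (v + 1) + 5 := by
    have := Nat.lt_add_log_of_two_pow_le_mul (not_lt.mp fun h => by have := hmax (v + 1) h; omega)
    omega
  have hnot := not_takumRepresentable_two_pow_add_one hn hup
  refine ⟨by exact_mod_cast hnot, fun m hm =>
    takumRepresentable_intCast_of_abs_le_two_pow hv1 (by omega) hlow hm, fun M₀ hM₀ => ?_⟩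
  by_contra! h
  exact hnot (by exact_mod_cast hM₀ (2 ^ v + 1) (by rw [abs_of_nonneg (by positivity)]; omega))
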